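/- arXiv:1710.07765 — 2 statements merged into one kernel-verified Lean document; each statement's English description precedes it below -/
import Mathlib

section
/- Let G₁ and G₂ be finite abelian groups with |G₁| ≥ 2 and |G₂| ≥ 2, and let F : G₁ → G₂ be a function with differential uniformity k = Δ_F. Then 2·𝒜(F) ≥ (|G₁| − 2)·⌈|G₁|²/|G₂|⌉ + ⌈(|G₁| − k)²/(|G₂| − 1)⌉ + k² − |G₁|·(|G₁| − 1), where ⌈·⌉ denotes the ceiling of a rational number. -/
/-!
Since `∑_b δ_F(a,b) = |G₁|` for every `a`, twice the ambiguity is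
`∑_{a ≠ 0} (∑_b δ_F(a,b)² - |G₁|)`. Cauchy–Schwarz bounds every inner sum of squares below by
`⌈|G₁|²/|G₂|⌉`. For the pair `(a, b₀)` attaining `k = Δ_F`, splitting off `δ_F(a,b₀)² = k²` and
applying Cauchy–Schwarz to the remaining `|G₂| - 1` values, which sum to `|G₁| - k`, gives the
sharper bound `k² + ⌈(|G₁| - k)²/(|G₂| - 1)⌉` for that one `a`.
-/

open Finset

/-- `δ_F(a,b) = |{x : F(x+a) - F(x) = b}|`. -/
def deltaF {G₁ G₂ : Type*} [AddCommGroup G₁] [Fintype G₁] [DecidableEq G₁]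
    [AddCommGroup G₂] [DecidableEq G₂] (F : G₁ → G₂) (a : G₁) (b : G₂) : ℕ :=
  (univ.filter fun x => F (x + a) - F x = b).card

/-- The ambiguity `𝒜(F) = Σ_{a ≠ 0} Σ_b (δ_F(a,b) choose 2)`. -/
def ambiguity {G₁ G₂ : Type*} [AddCommGroup G₁] [Fintype G₁] [DecidableEq G₁]
    [AddCommGroup G₂] [Fintype G₂] [DecidableEq G₂] (F : G₁ → G₂) : ℕ :=
  ∑ a ∈ univ.filter (fun a : G₁ => a ≠ 0), ∑ b : G₂, (deltaF F a b).choose 2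

/-- The differential uniformity `Δ_F = max_{a ≠ 0, b} δ_F(a,b)`. -/
def diffUnif {G₁ G₂ : Type*} [AddCommGroup G₁] [Fintype G₁] [DecidableEq G₁]
    [AddCommGroup G₂] [Fintype G₂] [DecidableEq G₂] (F : G₁ → G₂) : ℕ :=
  (univ.filter (fun a : G₁ => a ≠ 0)).sup fun a => univ.sup fun b : G₂ => deltaF F a b

theorem ceil_sq_sum_div_card_le_sum_sq {ι : Type*} (s : Finset ι) (f : ι → ℤ) :
    ⌈(∑ i ∈ s, (f i : ℚ)) ^ 2 / #s⌉ ≤ ∑ i ∈ s, f i ^ 2 := by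
  rw [Int.ceil_le]
  push_cast
  exact div_le_of_le_mul₀ (by positivity) (by positivity)
    (by rw [mul_comm]; exact sq_sum_le_card_mul_sum_sq)

theorem two_mul_choose_two_eq (m : ℕ) : (2 * m.choose 2 : ℤ) = (m : ℤ) ^ 2 - m := by
  have h : ((2 * m.choose 2 : ℕ) : ℚ) = (m : ℚ) ^ 2 - m := by
    push_cast
    rw [Nat.cast_choose_two]
    ring
  exact_mod_cast h

section Differential

variable {G₁ G₂ : Type*} [AddCommGroup G₁] [Fintype G₁] [DecidableEq G₁]
  [AddCommGroup G₂] [Fintype G₂] [DecidableEq G₂]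

theorem sum_deltaF (F : G₁ → G₂) (a : G₁) : ∑ b : G₂, deltaF F a b = Fintype.card G₁ :=
  (card_eq_sum_card_fiberwise fun x _ => mem_univ (F (x + a) - F x)).symm

theorem two_mul_ambiguity (F : G₁ → G₂) :
    2 * (ambiguity F : ℤ) = ∑ a ∈ univ.filter (fun a : G₁ => a ≠ 0),
      (∑ b : G₂, (deltaF F a b : ℤ) ^ 2 - Fintype.card G₁) := by
  have hsum (a : G₁) : ∑ b : G₂, (deltaF F a b : ℤ) = Fintype.card G₁ := by
    exact_mod_cast sum_deltaF F a
  simp only [ambiguity, Nat.cast_sum, mul_sum, two_mul_choose_two_eq, sum_sub_distrib, hsum]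

theorem ceil_card_sq_div_card_le_sum_sq_deltaF (F : G₁ → G₂) (a : G₁) :
    ⌈((Fintype.card G₁ : ℚ) ^ 2 / Fintype.card G₂)⌉ ≤ ∑ b : G₂, (deltaF F a b : ℤ) ^ 2 := by
  have h := ceil_sq_sum_div_card_le_sum_sq univ fun b => (deltaF F a b : ℤ)
  push_cast at h
  rwa [← Nat.cast_sum, sum_deltaF, card_univ] at h

theorem ceil_sq_div_add_sq_le_sum_sq_deltaF (F : G₁ → G₂) (a : G₁) (b₀ : G₂) :
    ⌈(((Fintype.card G₁ : ℚ) - deltaF F a b₀) ^ 2 / ((Fintype.card G₂ : ℚ) - 1))⌉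
        + (deltaF F a b₀ : ℤ) ^ 2 ≤ ∑ b : G₂, (deltaF F a b : ℤ) ^ 2 := by
  have h := ceil_sq_sum_div_card_le_sum_sq (univ.erase b₀) fun b => (deltaF F a b : ℤ)
  have hsum : ∑ b ∈ univ.erase b₀, (deltaF F a b : ℚ) = Fintype.card G₁ - deltaF F a b₀ := by
    rw [sum_erase_eq_sub (mem_univ b₀), ← Nat.cast_sum, sum_deltaF]
  push_cast at h
  rw [hsum, cast_card_erase_of_mem (mem_univ b₀), card_univ] at h
  rw [← add_sum_erase _ _ (mem_univ b₀)]
  linarith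

theorem exists_deltaF_eq_diffUnif (F : G₁ → G₂) (h : 1 < Fintype.card G₁) :
    ∃ a ∈ univ.filter (fun a : G₁ => a ≠ 0), ∃ b : G₂, deltaF F a b = diffUnif F := by
  obtain ⟨a₀, ha₀⟩ := Fintype.exists_ne_of_one_lt_card h 0
  obtain ⟨a, ha, hsup_a⟩ := exists_mem_eq_sup (univ.filter fun a : G₁ => a ≠ 0)
    ⟨a₀, mem_filter.2 ⟨mem_univ _, ha₀⟩⟩
    fun a => univ.sup fun b : G₂ => deltaF F a b
  obtain ⟨b, -, hsup_b⟩ := exists_mem_eq_sup univ univ_nonempty (deltaF F a)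
  exact ⟨a, ha, b, by rw [diffUnif, hsup_a, hsup_b]⟩

end Differential

theorem ambiguity_lower_bound_diff_uniformity_general {G₁ G₂ : Type*}
    [AddCommGroup G₁] [Fintype G₁] [DecidableEq G₁]
    [AddCommGroup G₂] [Fintype G₂] [DecidableEq G₂]
    (h₁ : 2 ≤ Fintype.card G₁)
    (F : G₁ → G₂) (k : ℕ) (hk : k = diffUnif F) :
    ((Fintype.card G₁ : ℤ) - 2) * ⌈((Fintype.card G₁ : ℚ) ^ 2 / (Fintype.card G₂ : ℚ))⌉
        + ⌈(((Fintype.card G₁ : ℚ) - k) ^ 2 / ((Fintype.card G₂ : ℚ) - 1))⌉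
        + (k : ℤ) ^ 2 - (Fintype.card G₁ : ℤ) * ((Fintype.card G₁ : ℤ) - 1) ≤
      2 * (ambiguity F : ℤ) := by
  obtain ⟨A, hA, B, hAB⟩ := exists_deltaF_eq_diffUnif F h₁
  rw [hk, ← hAB, two_mul_ambiguity, ← add_sum_erase _ _ hA]
  set others := (univ.filter fun a : G₁ => a ≠ 0).erase A
  have hcard : (#others : ℤ) = Fintype.card G₁ - 2 := by
    rw [cast_card_erase_of_mem hA, filter_ne', cast_card_erase_of_mem (mem_univ 0), card_univ]
    ring
  have hothers := card_nsmul_le_sum others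
    (fun a => ∑ b : G₂, (deltaF F a b : ℤ) ^ 2 - Fintype.card G₁) _
    fun a _ => sub_le_sub_right (ceil_card_sq_div_card_le_sum_sq_deltaF F a) _
  rw [nsmul_eq_mul, hcard] at hothers
  linear_combination ceil_sq_div_add_sq_le_sum_sq_deltaF F A B + hothers

theorem ambiguity_lower_bound_diff_uniformity {G₁ G₂ : Type*}
    [AddCommGroup G₁] [Fintype G₁] [DecidableEq G₁]
    [AddCommGroup G₂] [Fintype G₂] [DecidableEq G₂]
    (h₁ : 2 ≤ Fintype.card G₁) (h₂ : 2 ≤ Fintype.card G₂)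
    (F : G₁ → G₂) (k : ℕ) (hk : k = diffUnif F) :
    ((Fintype.card G₁ : ℤ) - 2) * ⌈((Fintype.card G₁ : ℚ) ^ 2 / (Fintype.card G₂ : ℚ))⌉
        + ⌈(((Fintype.card G₁ : ℚ) - k) ^ 2 / ((Fintype.card G₂ : ℚ) - 1))⌉
        + (k : ℤ) ^ 2 - (Fintype.card G₁ : ℤ) * ((Fintype.card G₁ : ℤ) - 1) ≤
      2 * (ambiguity F : ℤ) :=
  ambiguity_lower_bound_diff_uniformity_general h₁ F k hk
end

section
/- Let n ≥ 1 and let f : 𝔽₂ⁿ → 𝔽₂ be a Boolean function which is plateaued of amplitude μ, i.e., there is a natural number μ such that for every α ∈ 𝔽₂ⁿ the Walsh transform satisfies W_f(α)² ∈ {0, μ²}. Then Σ_{a ∈ 𝔽₂ⁿ, a ≠ 0} Σ_{b ∈ 𝔽₂} δ_f(a,b)² = 2^(n−1)·μ² + (2ⁿ − 2)·2^(2n−1) (equivalently, the derivative imbalance satisfies NB_f = 2^(n−1)·(μ² − 2ⁿ)). -/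
/-!
The autocorrelation `C(a) = Σₓ (-1)^(f(x+a) - f(x))` equals `δ_f(a,0) - δ_f(a,1)`, while
`δ_f(a,0) + δ_f(a,1) = 2ⁿ`; hence `2 Σ_b δ_f(a,b)² = 2²ⁿ + C(a)²`. By Wiener–Khinchin, `W_f²` is
the Walsh transform of `C`, so Plancherel gives `Σ_α W_f(α)⁴ = 2ⁿ Σ_a C(a)²`. For plateaued `f`,
`W_f⁴ = μ² W_f²`, and Parseval `Σ_α W_f(α)² = 2²ⁿ` yields `Σ_a C(a)² = 2ⁿ μ²`. Summing over `a`
and removing the term `a = 0` gives the formula.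
-/

open Finset

/-- The Walsh transform `W_f(α) = Σ_x (−1)^(f(x) + α·x)` of a Boolean function
`f : 𝔽₂ⁿ → 𝔽₂`. -/
def walshB {n : ℕ} (f : (Fin n → ZMod 2) → ZMod 2) (α : Fin n → ZMod 2) : ℤ :=
  ∑ x : Fin n → ZMod 2, if f x + (∑ i, α i * x i) = (0 : ZMod 2) then 1 else -1

def signChar : AddChar (ZMod 2) ℤ where
  toFun c := if c = 0 then 1 else -1
  map_zero_eq_one' := rfl
  map_add_eq_mul' := by decide

lemma signChar_one : signChar 1 = -1 := rfl

lemma signChar_eq_one_iff {c : ZMod 2} : signChar c = 1 ↔ c = 0 := by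
  revert c; decide

lemma signChar_sub (c d : ZMod 2) : signChar (c - d) = signChar c * signChar d := by
  rw [sub_eq_add_neg, ZMod.neg_eq_self_mod_two, AddChar.map_add_eq_mul]

lemma signChar_mul_self (c : ZMod 2) : signChar c * signChar c = 1 := by
  rw [← signChar_sub, sub_self, AddChar.map_zero_eq_one]

section Walsh

variable {ι : Type*} [Fintype ι]

def dotProductChar (z : ι → ZMod 2) : AddChar (ι → ZMod 2) ℤ where
  toFun α := signChar (α ⬝ᵥ z)
  map_zero_eq_one' := by simp
  map_add_eq_mul' α β := by rw [add_dotProduct, AddChar.map_add_eq_mul]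

@[simp] lemma dotProductChar_apply (z α : ι → ZMod 2) :
    dotProductChar z α = signChar (α ⬝ᵥ z) := rfl

variable [DecidableEq ι]

lemma dotProductChar_eq_zero_iff {z : ι → ZMod 2} : dotProductChar z = 0 ↔ z = 0 := by
  refine ⟨fun h => funext fun i => ?_, fun h => ?_⟩
  · have := DFunLike.congr_fun h (Pi.single i 1)
    rwa [dotProductChar_apply, single_dotProduct, one_mul, AddChar.zero_apply,
      signChar_eq_one_iff] at this
  · ext α; simp [h]

lemma sum_signChar_dotProduct (z : ι → ZMod 2) :
    ∑ α, signChar (α ⬝ᵥ z) = if z = 0 then 2 ^ Fintype.card ι else 0 := by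
  classical
  simpa [dotProductChar_eq_zero_iff] using (dotProductChar z).sum_eq_ite

def walshTransform (g : (ι → ZMod 2) → ℤ) (α : ι → ZMod 2) : ℤ :=
  ∑ x, g x * signChar (α ⬝ᵥ x)

theorem sum_walshTransform_mul (g h : (ι → ZMod 2) → ℤ) :
    ∑ α, walshTransform g α * walshTransform h α = 2 ^ Fintype.card ι * ∑ x, g x * h x := by
  calc ∑ α, walshTransform g α * walshTransform h α
      = ∑ α, ∑ x, ∑ y, g x * h y * signChar (α ⬝ᵥ (x - y)) := by
        refine sum_congr rfl fun α _ => ?_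
        rw [walshTransform, walshTransform, sum_mul_sum]
        refine sum_congr rfl fun x _ => sum_congr rfl fun y _ => ?_
        rw [dotProduct_sub, signChar_sub]
        ring
    _ = ∑ x, ∑ y, g x * h y * ∑ α, signChar (α ⬝ᵥ (x - y)) := by
        rw [sum_comm]
        refine sum_congr rfl fun x _ => ?_
        rw [sum_comm]
        simp only [mul_sum]
    _ = 2 ^ Fintype.card ι * ∑ x, g x * h x := by
        simp only [sum_signChar_dotProduct, sub_eq_zero, mul_ite, mul_zero, sum_ite_eq,
          mem_univ, if_true, mul_sum]
        exact sum_congr rfl fun x _ => mul_comm _ _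

end Walsh

def autocorr {G : Type*} [AddCommGroup G] [Fintype G] (F : G → ZMod 2) (a : G) : ℤ :=
  ∑ x, signChar (F (x + a) - F x)

lemma ZMod.sum_univ_two {M : Type*} [AddCommMonoid M] (g : ZMod 2 → M) : ∑ b, g b = g 0 + g 1 :=
  Fin.sum_univ_two g

section Derivative

variable {G : Type*} [AddCommGroup G] [Fintype G] [DecidableEq G]

theorem sum_deltaF_s19 {H : Type*} [AddCommGroup H] [Fintype H] [DecidableEq H] (F : G → H) (a : G) :
    ∑ b, deltaF F a b = Fintype.card G :=
  (card_eq_sum_card_fiberwise fun x _ => mem_univ (F (x + a) - F x)).symm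

theorem autocorr_eq_deltaF_sub (F : G → ZMod 2) (a : G) :
    autocorr F a = deltaF F a 0 - deltaF F a 1 := by
  calc autocorr F a = ∑ b, ∑ x with F (x + a) - F x = b, signChar (F (x + a) - F x) :=
        (sum_fiberwise _ _ _).symm
    _ = ∑ b, (deltaF F a b : ℤ) * signChar b := by
        refine sum_congr rfl fun b _ => ?_
        rw [sum_congr rfl fun x hx => congrArg signChar (mem_filter.1 hx).2, sum_const,
          nsmul_eq_mul]
        rfl
    _ = deltaF F a 0 - deltaF F a 1 := by
        rw [ZMod.sum_univ_two, AddChar.map_zero_eq_one, signChar_one]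
        ring

omit [DecidableEq G] in
theorem autocorr_zero (F : G → ZMod 2) : autocorr F 0 = Fintype.card G := by
  simp [autocorr]

theorem two_mul_sum_sq_deltaF (F : G → ZMod 2) (a : G) :
    2 * ∑ b, (deltaF F a b : ℤ) ^ 2 = Fintype.card G ^ 2 + autocorr F a ^ 2 := by
  have htotal : (deltaF F a 0 : ℤ) + deltaF F a 1 = Fintype.card G := by
    exact_mod_cast (ZMod.sum_univ_two _).symm.trans (sum_deltaF_s19 F a)
  rw [autocorr_eq_deltaF_sub, ← htotal, ZMod.sum_univ_two]
  ring

theorem two_mul_sum_ne_zero_sum_sq_deltaF (F : G → ZMod 2) :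
    2 * ∑ a ∈ univ.filter (fun a => a ≠ 0), ∑ b, (deltaF F a b : ℤ) ^ 2
      = ∑ a, autocorr F a ^ 2 + Fintype.card G ^ 3 - 2 * Fintype.card G ^ 2 := by
  rw [filter_ne' univ 0, mul_sum, sum_erase_eq_sub (mem_univ 0)]
  simp only [two_mul_sum_sq_deltaF, autocorr_zero, sum_add_distrib, sum_const, card_univ,
    nsmul_eq_mul]
  ring

end Derivative

section Boolean

variable {n : ℕ}

lemma walshB_eq_sum_signChar (f : (Fin n → ZMod 2) → ZMod 2) (α : Fin n → ZMod 2) :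
    walshB f α = ∑ x, signChar (f x + α ⬝ᵥ x) := rfl

lemma walshB_eq_walshTransform (f : (Fin n → ZMod 2) → ZMod 2) (α : Fin n → ZMod 2) :
    walshB f α = walshTransform (fun x => signChar (f x)) α := by
  simp only [walshB_eq_sum_signChar, walshTransform, AddChar.map_add_eq_mul]

theorem walshB_sq (f : (Fin n → ZMod 2) → ZMod 2) (α : Fin n → ZMod 2) :
    walshB f α ^ 2 = walshTransform (autocorr f) α := by
  have hshift : ∀ x a : Fin n → ZMod 2,
      signChar (f x + α ⬝ᵥ x) * signChar (f (x + a) + α ⬝ᵥ (x + a))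
        = signChar (f (x + a) - f x) * signChar (α ⬝ᵥ a) := by
    intro x a
    rw [mul_comm, ← signChar_sub, ← AddChar.map_add_eq_mul, dotProduct_add]
    congr 1
    ring
  calc walshB f α ^ 2
      = ∑ x, ∑ a, signChar (f x + α ⬝ᵥ x) * signChar (f (x + a) + α ⬝ᵥ (x + a)) := by
        rw [sq, walshB_eq_sum_signChar, sum_mul_sum]
        exact sum_congr rfl fun x _ => (Fintype.sum_equiv (Equiv.addLeft x) _ _ fun _ => rfl).symm
    _ = walshTransform (autocorr f) α := by
        simp only [hshift, walshTransform, autocorr, sum_mul]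
        exact sum_comm

theorem sum_walshB_sq (f : (Fin n → ZMod 2) → ZMod 2) :
    ∑ α, walshB f α ^ 2 = 2 ^ (2 * n) := by
  simp only [walshB_eq_walshTransform, sq, sum_walshTransform_mul, signChar_mul_self]
  simp [pow_mul', sq]

theorem sum_walshB_pow_four (f : (Fin n → ZMod 2) → ZMod 2) :
    ∑ α, walshB f α ^ 4 = 2 ^ n * ∑ a, autocorr f a ^ 2 := by
  simp only [show ∀ α, walshB f α ^ 4 = walshB f α ^ 2 * walshB f α ^ 2 from fun α => by ring,
    walshB_sq]
  rw [sum_walshTransform_mul, Fintype.card_fin]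
  simp only [sq]

theorem sum_autocorr_sq_of_plateaued (f : (Fin n → ZMod 2) → ZMod 2) (μ : ℕ)
    (hplateau : ∀ α : Fin n → ZMod 2, walshB f α ^ 2 = 0 ∨ walshB f α ^ 2 = (μ : ℤ) ^ 2) :
    ∑ a, autocorr f a ^ 2 = 2 ^ n * μ ^ 2 := by
  have hpow_four : ∀ α, walshB f α ^ 4 = (μ : ℤ) ^ 2 * walshB f α ^ 2 := fun α => by
    rw [show walshB f α ^ 4 = (walshB f α ^ 2) ^ 2 by ring]
    rcases hplateau α with h | h <;> rw [h] <;> ring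
  refine mul_left_cancel₀ (pow_ne_zero n two_ne_zero : (2 : ℤ) ^ n ≠ 0) ?_
  rw [← sum_walshB_pow_four, sum_congr rfl fun α _ => hpow_four α, ← mul_sum, sum_walshB_sq]
  ring

end Boolean

theorem sum_sq_delta_plateaued {n : ℕ} (hn : 1 ≤ n)
    (f : (Fin n → ZMod 2) → ZMod 2) (μ : ℕ)
    (hplateau : ∀ α : Fin n → ZMod 2, walshB f α ^ 2 = 0 ∨ walshB f α ^ 2 = (μ : ℤ) ^ 2) :
    (∑ a ∈ univ.filter (fun a : Fin n → ZMod 2 => a ≠ 0), ∑ b : ZMod 2, (deltaF f a b) ^ 2) =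
      2 ^ (n - 1) * μ ^ 2 + (2 ^ n - 2) * 2 ^ (2 * n - 1) := by
  obtain ⟨m, rfl⟩ : ∃ m, n = m + 1 := ⟨n - 1, by omega⟩
  have key := two_mul_sum_ne_zero_sum_sq_deltaF f
  rw [sum_autocorr_sq_of_plateaued f μ hplateau] at key
  simp only [Fintype.card_pi, ZMod.card, prod_const, card_univ, Fintype.card_fin] at key
  push_cast at key
  have h2 : 2 ≤ 2 ^ (m + 1) := Nat.le_self_pow (Nat.succ_ne_zero m) 2
  rw [show m + 1 - 1 = m by omega, show 2 * (m + 1) - 1 = 2 * m + 1 by omega]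
  zify [h2]
  refine mul_left_cancel₀ (two_ne_zero : (2 : ℤ) ≠ 0) ?_
  linear_combination key
end
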